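/- arXiv:1306.3409 — 5 statements merged into one kernel-verified Lean document; each statement's English description precedes it below -/
import Mathlib

section
/- A set function R̂ is submodular if and only if its Lovasz extension R is convex. -/
open Finset

noncomputable def sortedVal {n : ℕ} (f : Fin n → ℝ) : Fin n → ℝ := f ∘ Tuple.sort f

noncomputable def thresholdSet {n : ℕ} (f : Fin n → ℝ) (i : Fin n) : Finset (Fin n) :=
  Finset.univ.filter (fun j => sortedVal f i ≤ f j)

noncomputable def lovasz {n : ℕ} (R : Finset (Fin n) → ℝ) (f : Fin n → ℝ) : ℝ :=
  (∑ i : Fin n, if h : (i : ℕ) + 1 < n then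
      R (thresholdSet f ⟨(i : ℕ) + 1, h⟩) * (sortedVal f ⟨(i : ℕ) + 1, h⟩ - sortedVal f i)
    else 0)
  + R Finset.univ * (if h : 0 < n then sortedVal f ⟨0, h⟩ else 0)

def Submodular {α : Type*} [DecidableEq α] (R : Finset α → ℝ) : Prop :=
  ∀ A B : Finset α, R (A ∪ B) + R (A ∩ B) ≤ R A + R B

/-!
The Lovász extension of a modular set function `A ↦ ∑ j ∈ A, v j` is the linear form
`f ↦ ∑ j, f j * v j` (summation by parts), and `lovasz R f` is monotone in the values of `R`
on the threshold sets of `f`. For a permutation `σ`, the greedy weights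
`R {σ m, σ (m+1), …} - R {σ (m+1), …}` sum to `R` on every tail of `σ`, and, when `R` is
submodular, to at most `R A` on every `A`. When `σ` sorts `f`, the threshold sets of `f` are
tails of `σ`; so `lovasz R` is the pointwise maximum of the linear forms given by greedy
weights, hence convex. Conversely, `lovasz R` equals `R A` at the indicator of `A` and
`(R (A ∪ B) + R (A ∩ B)) / 2` at the midpoint of the indicators of `A` and `B`, so midpoint
convexity is submodularity.
-/

theorem Finset.sum_range_by_parts_tail {R : Type*} [CommRing R] (a b : ℕ → R) (n : ℕ) :
    ∑ k ∈ range n, a k * b k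
      = a 0 * ∑ k ∈ range n, b k + ∑ i ∈ range n, (a (i + 1) - a i) * ∑ k ∈ Ico (i + 1) n, b k := by
  simp_rw [mul_sum]
  rw [range_eq_Ico, sum_Ico_Ico_comm', ← sum_add_distrib]
  refine sum_congr rfl fun k _ => ?_
  rw [← sum_mul, ← range_eq_Ico, sum_range_sub]
  ring

theorem Fin.sum_univ_by_parts_tail {n : ℕ} (s u : Fin n → ℝ) :
    ∑ k, s k * u k
      = (∑ i : Fin n, if h : (i : ℕ) + 1 < n then
            (∑ k ∈ univ.filter (fun k : Fin n => (i : ℕ) + 1 ≤ k), u k) * (s ⟨i + 1, h⟩ - s i)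
          else 0)
        + (∑ k, u k) * (if h : 0 < n then s ⟨0, h⟩ else 0) := by
  set a : ℕ → ℝ := fun k => if h : k < n then s ⟨k, h⟩ else 0
  set b : ℕ → ℝ := fun k => if h : k < n then u ⟨k, h⟩ else 0
  have ha (k : Fin n) : s k = a k := by simp [a]
  have hb (k : Fin n) : u k = b k := by simp [b]
  have htail (p : ℕ) : ∑ k ∈ univ.filter (fun k : Fin n => p ≤ k), u k = ∑ k ∈ Ico p n, b k := by
    rw [sum_filter]
    simp_rw [hb]
    rw [Fin.sum_univ_eq_sum_range (fun k => if p ≤ k then b k else 0), ← sum_filter]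
    congr 1
    ext k
    simp [and_comm]
  have hsum (g : ℕ → ℝ) : ∑ k : Fin n, g k = ∑ k ∈ range n, g k := Fin.sum_univ_eq_sum_range g n
  have hprod : ∑ k, s k * u k = ∑ k ∈ range n, a k * b k := by
    simp_rw [ha, hb]
    exact hsum fun k => a k * b k
  rw [hprod, sum_range_by_parts_tail, add_comm, ← hsum, ← hsum]
  simp_rw [← hb]
  congr 1
  · refine sum_congr rfl fun i _ => ?_
    split_ifs with h
    · rw [htail, ha, ha]
      exact mul_comm _ _
    · rw [Ico_eq_empty (by omega), sum_empty, mul_zero]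
  · exact mul_comm _ _

theorem convexOn_univ_of_forall_exists_linearMap_le {E : Type*} [AddCommGroup E] [Module ℝ E]
    {F : E → ℝ} (h : ∀ x, ∃ φ : E →ₗ[ℝ] ℝ, φ x = F x ∧ ∀ y, φ y ≤ F y) :
    ConvexOn ℝ Set.univ F := by
  refine ⟨convex_univ, fun x _ y _ a b ha hb _ => ?_⟩
  obtain ⟨φ, hφ, hφF⟩ := h (a • x + b • y)
  calc F (a • x + b • y) = a * φ x + b * φ y := by simp [← hφ]
    _ ≤ a • F x + b • F y := by
      simp only [smul_eq_mul]
      gcongr <;> apply hφF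

theorem Submodular.insert_sub_le_insert_sub {α : Type*} [DecidableEq α] {R : Finset α → ℝ}
    (hR : Submodular R) {S T : Finset α} {e : α} (hST : S ⊆ T) (he : e ∉ T) :
    R (insert e T) - R T ≤ R (insert e S) - R S := by
  have := hR (insert e S) T
  rw [insert_union, union_eq_right.2 hST, insert_inter_of_notMem he, inter_eq_left.2 hST] at this
  linarith

theorem Monotone.exists_le_iff_le {β : Type*} [Preorder β] {n : ℕ} {s : Fin n → β}
    (hs : Monotone s) (t : β) : ∃ m : ℕ, ∀ i : Fin n, t ≤ s i ↔ m ≤ (i : ℕ) := by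
  classical
  have hex : ∃ m : ℕ, ∀ i : Fin n, m ≤ (i : ℕ) → t ≤ s i :=
    ⟨n, fun i hi => absurd i.isLt (by omega)⟩
  refine ⟨Nat.find hex, fun i => ⟨fun hi => ?_, Nat.find_spec hex i⟩⟩
  by_contra hlt
  obtain ⟨j, hij, hj⟩ : ∃ j : Fin n, (i : ℕ) ≤ j ∧ ¬ t ≤ s j := by
    simpa using Nat.find_min hex (not_le.1 hlt)
  exact hj (hi.trans (hs (Fin.le_def.2 hij)))

section Permutation

variable {n : ℕ} (σ : Equiv.Perm (Fin n))

def tailSet (m : ℕ) : Finset (Fin n) :=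
  univ.filter fun j => m ≤ (σ.symm j : ℕ)

variable {σ} in
@[simp]
theorem mem_tailSet {m : ℕ} {j : Fin n} : j ∈ tailSet σ m ↔ m ≤ (σ.symm j : ℕ) := by
  simp [tailSet]

theorem tailSet_zero : tailSet σ 0 = univ := by
  ext; simp

theorem tailSet_of_le {m : ℕ} (hm : n ≤ m) : tailSet σ m = ∅ := by
  ext j; simpa using (σ.symm j).isLt.trans_le hm

theorem apply_notMem_tailSet_succ {m : ℕ} (hm : m < n) : σ ⟨m, hm⟩ ∉ tailSet σ (m + 1) := by
  simp

theorem tailSet_eq_insert {m : ℕ} (hm : m < n) :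
    tailSet σ m = insert (σ ⟨m, hm⟩) (tailSet σ (m + 1)) := by
  ext j
  simp only [mem_insert, mem_tailSet, ← σ.symm_apply_eq, Fin.ext_iff]
  omega

theorem sum_tailSet (v : Fin n → ℝ) (m : ℕ) :
    ∑ j ∈ tailSet σ m, v j = ∑ k ∈ univ.filter (fun k : Fin n => m ≤ k), v (σ k) := by
  rw [tailSet, sum_filter, sum_filter, ← Equiv.sum_comp σ]
  simp

variable (R : Finset (Fin n) → ℝ)

noncomputable def greedyWeight (j : Fin n) : ℝ :=
  R (tailSet σ (σ.symm j)) - R (tailSet σ (σ.symm j + 1))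

theorem greedyWeight_apply {m : ℕ} (hm : m < n) :
    greedyWeight σ R (σ ⟨m, hm⟩) = R (tailSet σ m) - R (tailSet σ (m + 1)) := by
  simp [greedyWeight]

variable {R}

theorem sum_greedyWeight_tailSet (hR : R ∅ = 0) (m : ℕ) :
    ∑ j ∈ tailSet σ m, greedyWeight σ R j = R (tailSet σ m) := by
  by_cases hm : m < n
  · rw [tailSet_eq_insert σ hm, sum_insert (apply_notMem_tailSet_succ σ hm),
      sum_greedyWeight_tailSet hR (m + 1), greedyWeight_apply, ← tailSet_eq_insert σ hm,
      sub_add_cancel]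
  · rw [tailSet_of_le σ (not_lt.1 hm), sum_empty, hR]
termination_by n - m

theorem sum_greedyWeight_univ (hR : R ∅ = 0) : ∑ j, greedyWeight σ R j = R univ := by
  rw [← tailSet_zero σ, sum_greedyWeight_tailSet σ hR]

theorem sum_greedyWeight_inter_tailSet_le (hR : R ∅ = 0) (hsub : Submodular R)
    (A : Finset (Fin n)) (m : ℕ) :
    ∑ j ∈ A ∩ tailSet σ m, greedyWeight σ R j ≤ R (A ∩ tailSet σ m) := by
  by_cases hm : m < n
  · have ih := sum_greedyWeight_inter_tailSet_le hR hsub A (m + 1)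
    rw [tailSet_eq_insert σ hm]
    by_cases heA : σ ⟨m, hm⟩ ∈ A
    · have hmarg := hsub.insert_sub_le_insert_sub (inter_subset_right (s₁ := A))
        (apply_notMem_tailSet_succ σ hm)
      rw [← tailSet_eq_insert σ hm, ← greedyWeight_apply σ R hm] at hmarg
      rw [inter_insert_of_mem heA, sum_insert
        (fun h => apply_notMem_tailSet_succ σ hm (mem_inter.1 h).2)]
      linarith
    · rwa [inter_insert_of_notMem heA]
  · rw [tailSet_of_le σ (not_lt.1 hm), inter_empty, sum_empty, hR]
termination_by n - m

theorem sum_greedyWeight_le (hR : R ∅ = 0) (hsub : Submodular R) (A : Finset (Fin n)) :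
    ∑ j ∈ A, greedyWeight σ R j ≤ R A := by
  simpa [tailSet_zero] using sum_greedyWeight_inter_tailSet_le σ hR hsub A 0

end Permutation

section Lovasz

variable {n : ℕ}

theorem monotone_sortedVal (f : Fin n → ℝ) : Monotone (sortedVal f) :=
  Tuple.monotone_sort f

theorem sortedVal_le_sortedVal_succ (f : Fin n → ℝ) (i : Fin n) (h : (i : ℕ) + 1 < n) :
    sortedVal f i ≤ sortedVal f ⟨i + 1, h⟩ :=
  monotone_sortedVal f (Fin.le_def.2 (Nat.le_succ i))

theorem apply_eq_sortedVal (f : Fin n → ℝ) (j : Fin n) :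
    f j = sortedVal f ((Tuple.sort f).symm j) := by
  simp [sortedVal]

theorem exists_filter_le_eq_tailSet (f : Fin n → ℝ) (t : ℝ) :
    ∃ m, univ.filter (fun j => t ≤ f j) = tailSet (Tuple.sort f) m := by
  obtain ⟨m, hm⟩ := (monotone_sortedVal f).exists_le_iff_le t
  exact ⟨m, by ext j; simp [apply_eq_sortedVal f j, hm]⟩

theorem thresholdSet_eq_tailSet (f : Fin n → ℝ) {a b : Fin n} (hab : (a : ℕ) + 1 = b)
    (hlt : sortedVal f a < sortedVal f b) : thresholdSet f b = tailSet (Tuple.sort f) b := by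
  ext j
  simp only [thresholdSet, mem_filter, mem_univ, true_and, mem_tailSet]
  rw [apply_eq_sortedVal f j]
  refine ⟨fun h => ?_, fun h => monotone_sortedVal f (Fin.le_def.2 h)⟩
  by_contra hj
  exact (h.trans (monotone_sortedVal f (Fin.le_def.2 (by omega)))).not_gt hlt

theorem lovasz_sum (v f : Fin n → ℝ) : lovasz (fun A => ∑ j ∈ A, v j) f = ∑ j, f j * v j := by
  set σ := Tuple.sort f
  rw [← Equiv.sum_comp σ]
  refine Eq.trans ?_ (Fin.sum_univ_by_parts_tail (sortedVal f) (v ∘ σ)).symm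
  rw [lovasz, Function.comp_def, Equiv.sum_comp σ v]
  congr 1
  refine sum_congr rfl fun i _ => ?_
  split_ifs with h
  · rcases (sortedVal_le_sortedVal_succ f i h).eq_or_lt with heq | hlt
    · rw [← heq, sub_self, mul_zero, mul_zero]
    · rw [thresholdSet_eq_tailSet f rfl hlt, sum_tailSet]
  · rfl

theorem lovasz_mono {R R' : Finset (Fin n) → ℝ} {f : Fin n → ℝ}
    (h : ∀ i, R (thresholdSet f i) ≤ R' (thresholdSet f i)) (huniv : R univ = R' univ) :
    lovasz R f ≤ lovasz R' f := by
  rw [lovasz, lovasz, huniv]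
  gcongr with i
  split_ifs with hi
  · exact mul_le_mul_of_nonneg_right (h _)
      (sub_nonneg.2 (sortedVal_le_sortedVal_succ f i hi))
  · rfl

theorem lovasz_congr {R R' : Finset (Fin n) → ℝ} {f : Fin n → ℝ}
    (h : ∀ i, R (thresholdSet f i) = R' (thresholdSet f i)) (huniv : R univ = R' univ) :
    lovasz R f = lovasz R' f :=
  (lovasz_mono (fun i => (h i).le) huniv).antisymm (lovasz_mono (fun i => (h i).ge) huniv.symm)

variable {R : Finset (Fin n) → ℝ}

theorem sum_greedyWeight_of_superlevel (hR : R ∅ = 0) {f : Fin n → ℝ} {t : ℝ}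
    {S : Finset (Fin n)} (hS : ∀ j, j ∈ S ↔ t ≤ f j) :
    ∑ j ∈ S, greedyWeight (Tuple.sort f) R j = R S := by
  obtain ⟨m, hm⟩ := exists_filter_le_eq_tailSet f t
  obtain rfl : S = tailSet (Tuple.sort f) m := by rw [← hm]; ext j; simp [hS]
  exact sum_greedyWeight_tailSet _ hR m

theorem lovasz_eq_sum_mul_greedyWeight (hR : R ∅ = 0) (f : Fin n → ℝ) :
    lovasz R f = ∑ j, f j * greedyWeight (Tuple.sort f) R j := by
  rw [← lovasz_sum]
  refine lovasz_congr (fun i => ?_) (sum_greedyWeight_univ _ hR).symm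
  exact (sum_greedyWeight_of_superlevel hR (t := sortedVal f i) fun j => by
    simp [thresholdSet]).symm

theorem sum_mul_greedyWeight_le_lovasz (hR : R ∅ = 0) (hsub : Submodular R)
    (τ : Equiv.Perm (Fin n)) (f : Fin n → ℝ) :
    ∑ j, f j * greedyWeight τ R j ≤ lovasz R f := by
  rw [← lovasz_sum]
  exact lovasz_mono (fun i => sum_greedyWeight_le τ hR hsub _) (sum_greedyWeight_univ τ hR)

theorem lovasz_convexOn_of_submodular (hR : R ∅ = 0) (hsub : Submodular R) :
    ConvexOn ℝ Set.univ (lovasz R) := by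
  refine convexOn_univ_of_forall_exists_linearMap_le fun f =>
    ⟨Fintype.linearCombination ℝ (greedyWeight (Tuple.sort f) R), ?_, fun g => ?_⟩
  · simp [lovasz_eq_sum_mul_greedyWeight hR, Fintype.linearCombination_apply]
  · simpa [Fintype.linearCombination_apply] using
      sum_mul_greedyWeight_le_lovasz hR hsub (Tuple.sort f) g

theorem lovasz_indicator (hR : R ∅ = 0) (A : Finset (Fin n)) :
    lovasz R (fun j => if j ∈ A then 1 else 0) = R A := by
  rw [lovasz_eq_sum_mul_greedyWeight hR]
  simp only [ite_mul, one_mul, zero_mul, sum_ite_mem, univ_inter]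
  exact sum_greedyWeight_of_superlevel hR (t := 1) fun j => by by_cases j ∈ A <;> simp [*]

theorem lovasz_midpoint_indicator (hR : R ∅ = 0) (A B : Finset (Fin n)) :
    lovasz R ((2⁻¹ : ℝ) • (fun j => if j ∈ A then 1 else 0) +
      (2⁻¹ : ℝ) • (fun j => if j ∈ B then 1 else 0)) = (R (A ∪ B) + R (A ∩ B)) / 2 := by
  rw [lovasz_eq_sum_mul_greedyWeight hR]
  simp only [Pi.add_apply, Pi.smul_apply, smul_eq_mul, add_mul, mul_assoc, sum_add_distrib,
    ← mul_sum, ite_mul, one_mul, zero_mul, sum_ite_mem, univ_inter]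
  rw [← mul_add, ← sum_union_inter, sum_greedyWeight_of_superlevel hR (t := 2⁻¹) fun j => ?_,
    sum_greedyWeight_of_superlevel hR (t := 1) fun j => ?_]
  · ring
  all_goals by_cases j ∈ A <;> by_cases j ∈ B <;> simp [*] <;> norm_num

theorem submodular_of_lovasz_convexOn (hR : R ∅ = 0) (hconv : ConvexOn ℝ Set.univ (lovasz R)) :
    Submodular R := by
  intro A B
  have hhalf : (0 : ℝ) ≤ 2⁻¹ := by norm_num
  have := hconv.2 (Set.mem_univ fun j => if j ∈ A then 1 else 0)
    (Set.mem_univ fun j => if j ∈ B then 1 else 0) hhalf hhalf (by norm_num)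
  rw [lovasz_midpoint_indicator hR, lovasz_indicator hR, lovasz_indicator hR, smul_eq_mul,
    smul_eq_mul] at this
  linarith

end Lovasz

/-- a set function is submodular iff its Lovász extension is convex. -/
theorem submodular_iff_lovasz_convex {n : ℕ} (R : Finset (Fin n) → ℝ) (hR : R ∅ = 0) :
    Submodular R ↔ ConvexOn ℝ Set.univ (lovasz R) :=
  ⟨lovasz_convexOn_of_submodular hR, submodular_of_lovasz_convexOn hR⟩
end

section
/- Optimal thresholding does not increase the ratio of Lovasz extensions: if R̂, Ŝ are non-negative set functions with R̂(∅)=Ŝ(∅)=0 and R, S their Lovasz extensions, then for every f ∈ ℝ₊^n with S(f) > 0 one has R(f)/S(f) ≥ min_{i=1,...,n} R̂(C_i)/Ŝ(C_i), where C_i = {j : f_j ≥ f_i}. -/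
open Finset

section Aux

variable {n : ℕ} (f : Fin n → ℝ)

/-- coefficient of `thresholdSet f j` in the Lovász extension -/
noncomputable def lcoeff (j : Fin n) : ℝ :=
  sortedVal f j -
    (if h : 0 < (j : ℕ) then sortedVal f ⟨(j : ℕ) - 1, lt_trans (Nat.pred_lt h.ne') j.isLt⟩
     else 0)

lemma sortedVal_mono : Monotone (sortedVal f) := Tuple.monotone_sort f

lemma lcoeff_nonneg (hf : ∀ i, 0 ≤ f i) (j : Fin n) : 0 ≤ lcoeff f j := by
  unfold lcoeff
  split_ifs with h
  · have : (⟨(j : ℕ) - 1, lt_trans (Nat.pred_lt h.ne') j.isLt⟩ : Fin n) ≤ j := by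
      simp only [Fin.le_def]; exact Nat.sub_le _ _
    linarith [sortedVal_mono f this]
  · simpa [sortedVal] using hf (Tuple.sort f j)

lemma thresholdSet_zero (hn : 0 < n) : thresholdSet f ⟨0, hn⟩ = Finset.univ := by
  apply Finset.eq_univ_iff_forall.mpr
  intro j
  simp only [thresholdSet, mem_filter, mem_univ, true_and]
  have : f j = sortedVal f ((Tuple.sort f)⁻¹ j) := by simp [sortedVal]
  rw [this]
  exact sortedVal_mono f (show (⟨0, hn⟩ : Fin n) ≤ _ by simp [Fin.le_def])

lemma lovasz_eq_sum (R : Finset (Fin n) → ℝ) (hn : 0 < n) :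
    lovasz R f = ∑ j : Fin n, lcoeff f j * R (thresholdSet f j) := by
  classical
  let g : Fin n → ℝ := fun j => lcoeff f j * R (thresholdSet f j)
  let G : ℕ → ℝ := fun j => if h : j < n then g ⟨j, h⟩ else 0
  have hterm : ∀ i : Fin n,
      (if h : (i : ℕ) + 1 < n then
        R (thresholdSet f ⟨(i : ℕ) + 1, h⟩) * (sortedVal f ⟨(i : ℕ) + 1, h⟩ - sortedVal f i)
      else 0) = G ((i : ℕ) + 1) := by
    intro i
    by_cases h : (i : ℕ) + 1 < n
    · rw [dif_pos h]
      show _ = if h' : (i : ℕ) + 1 < n then g ⟨(i : ℕ) + 1, h'⟩ else 0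
      rw [dif_pos h]
      show _ = lcoeff f ⟨(i : ℕ) + 1, h⟩ * R (thresholdSet f ⟨(i : ℕ) + 1, h⟩)
      have hcc : lcoeff f ⟨(i : ℕ) + 1, h⟩ = sortedVal f ⟨(i : ℕ) + 1, h⟩ - sortedVal f i := by
        unfold lcoeff
        rw [dif_pos (show 0 < (((⟨(i : ℕ) + 1, h⟩ : Fin n)) : ℕ) by simp)]
        have he : (⟨((⟨(i : ℕ) + 1, h⟩ : Fin n) : ℕ) - 1,
            lt_trans (Nat.pred_lt (show 0 < (((⟨(i : ℕ) + 1, h⟩ : Fin n)) : ℕ) by simp).ne')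
              (⟨(i : ℕ) + 1, h⟩ : Fin n).isLt⟩ : Fin n) = i := Fin.ext (by simp)
        rw [he]
      rw [hcc]; ring
    · rw [dif_neg h]
      show (0 : ℝ) = if h' : (i : ℕ) + 1 < n then g ⟨(i : ℕ) + 1, h'⟩ else 0
      rw [dif_neg h]
  have h1 : (∑ i : Fin n, if h : (i : ℕ) + 1 < n then
        R (thresholdSet f ⟨(i : ℕ) + 1, h⟩) * (sortedVal f ⟨(i : ℕ) + 1, h⟩ - sortedVal f i)
      else 0) = ∑ i ∈ Finset.range n, G (i + 1) := by
    rw [Finset.sum_congr rfl fun i _ => hterm i]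
    exact Fin.sum_univ_eq_sum_range (fun i => G (i + 1)) n
  have h2 : ∑ i ∈ Finset.range (n + 1), G i
      = ∑ i ∈ Finset.range n, G (i + 1) + G 0 := Finset.sum_range_succ' G n
  have h3 : ∑ i ∈ Finset.range (n + 1), G i = ∑ i ∈ Finset.range n, G i + G n :=
    Finset.sum_range_succ G n
  have hGn : G n = 0 := dif_neg (lt_irrefl n)
  have h4 : ∑ i ∈ Finset.range n, G i = ∑ j : Fin n, g j := by
    rw [← Fin.sum_univ_eq_sum_range G n]
    refine Finset.sum_congr rfl fun j _ => ?_
    show (if h : (j : ℕ) < n then g ⟨(j : ℕ), h⟩ else 0) = g j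
    rw [dif_pos j.isLt]
  have hG0 : G 0 = g ⟨0, hn⟩ := dif_pos hn
  have hlast : R Finset.univ * (if h : 0 < n then sortedVal f ⟨0, h⟩ else 0) = g ⟨0, hn⟩ := by
    rw [dif_pos hn]
    show _ = lcoeff f ⟨0, hn⟩ * R (thresholdSet f ⟨0, hn⟩)
    have hc : lcoeff f (⟨0, hn⟩ : Fin n) = sortedVal f ⟨0, hn⟩ := by
      unfold lcoeff; rw [dif_neg (by simp)]; ring
    rw [hc, thresholdSet_zero f hn]; ring
  have hsum : ∑ j : Fin n, lcoeff f j * R (thresholdSet f j) = ∑ j : Fin n, g j := rfl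
  unfold lovasz
  rw [h1, hlast, hsum]
  linarith [h2, h3, h4, hG0, hGn]

end Aux

/-- optimal thresholding does not increase the ratio of Lovász
extensions: some thresholded set has finite ratio at most R(f)/S(f). -/
theorem optimal_thresholding {n : ℕ} (R S : Finset (Fin n) → ℝ)
    (hR0 : R ∅ = 0) (hS0 : S ∅ = 0)
    (hRpos : ∀ A : Finset (Fin n), 0 ≤ R A) (hSpos : ∀ A : Finset (Fin n), 0 ≤ S A)
    (f : Fin n → ℝ) (hf : ∀ i, 0 ≤ f i) (hSf : 0 < lovasz S f) :
    ∃ i : Fin n, 0 < S (thresholdSet f i) ∧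
      R (thresholdSet f i) / S (thresholdSet f i) ≤ lovasz R f / lovasz S f := by
  classical
  have hn : 0 < n := by
    by_contra h
    have hn0 : n = 0 := by omega
    subst hn0
    simp [lovasz] at hSf
  have hSsum := lovasz_eq_sum f S hn
  have hRsum := lovasz_eq_sum f R hn
  set T := thresholdSet f with hT
  set c := lcoeff f with hc
  have hcpos : ∀ j, 0 ≤ c j := lcoeff_nonneg f hf
  set I : Finset (Fin n) := Finset.univ.filter (fun j => 0 < c j * S (T j)) with hI
  have hIne : I.Nonempty := by
    by_contra h
    rw [Finset.not_nonempty_iff_eq_empty] at h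
    have hz : ∀ j : Fin n, c j * S (T j) = 0 := by
      intro j
      have hnot : ¬ 0 < c j * S (T j) := by
        intro hpos
        have hjI : j ∈ I := by simp [hI, hpos]
        rw [h] at hjI
        exact absurd hjI (Finset.notMem_empty j)
      exact le_antisymm (not_lt.mp hnot) (mul_nonneg (hcpos j) (hSpos _))
    rw [hSsum] at hSf
    have : ∑ j : Fin n, c j * S (T j) = 0 := Finset.sum_eq_zero fun j _ => hz j
    linarith
  obtain ⟨i0, hi0I, hi0min⟩ := I.exists_min_image (fun j => R (T j) / S (T j)) hIne
  have hi0 : 0 < c i0 * S (T i0) := by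
    simpa [hI] using hi0I
  have hSTi0 : 0 < S (T i0) := by
    rcases (mul_pos_iff.mp hi0) with ⟨_, h⟩ | ⟨h, _⟩
    · exact h
    · exact absurd (hcpos i0) (not_le.mpr h)
  refine ⟨i0, hSTi0, ?_⟩
  set r : ℝ := R (T i0) / S (T i0) with hr
  have hrnonneg : 0 ≤ r := div_nonneg (hRpos _) (hSpos _)
  have key : ∀ j : Fin n, r * (c j * S (T j)) ≤ c j * R (T j) := by
    intro j
    by_cases hj : 0 < c j * S (T j)
    · have hjI : j ∈ I := by simp [hI, hj]
      have hrj := hi0min j hjI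
      have hSTj : 0 < S (T j) := by
        rcases (mul_pos_iff.mp hj) with ⟨_, h⟩ | ⟨h, _⟩
        · exact h
        · exact absurd (hcpos j) (not_le.mpr h)
      have hmul : r * S (T j) ≤ R (T j) := (le_div_iff₀ hSTj).mp hrj
      calc r * (c j * S (T j)) = c j * (r * S (T j)) := by ring
        _ ≤ c j * R (T j) := mul_le_mul_of_nonneg_left hmul (hcpos j)
    · have h0 : c j * S (T j) = 0 := le_antisymm (not_lt.mp hj)
        (mul_nonneg (hcpos j) (hSpos _))
      rw [h0, mul_zero]
      exact mul_nonneg (hcpos j) (hRpos _)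
  have hsum : r * lovasz S f ≤ lovasz R f := by
    rw [hSsum, hRsum, Finset.mul_sum]
    exact Finset.sum_le_sum fun j _ => key j
  exact (le_div_iff₀ hSf).mpr (by linarith)
end

section
/- Exact penalty for constrained fractional set programs: let R̂, Ŝ be non-negative set functions, M̂_i constraint set functions with constraints M̂_i(C) ≤ k_i (i=1,...,K), and define penalties T̂_i(C) = max{0, M̂_i(C) - k_i} for C ≠ ∅ and T̂_i(∅)=0, with T̂ = Σ_i T̂_i. Let θ = min_i min_{M̂_i(C) > k_i} (M̂_i(C) - k_i) > 0 and let C₀ be feasible with Ŝ(C₀) > 0. Then for γ > (R̂(C₀)/(θ Ŝ(C₀))) · max_{C ⊆ V} Ŝ(C), every minimizer of C ↦ (R̂(C) + γT̂(C))/Ŝ(C) is feasible, and the minimum value of (R̂ + γT̂)/Ŝ over all subsets equals the minimum of R̂/Ŝ over feasible subsets. -/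
open Finset

/-- exact penalty for constrained fractional set programs:
for γ > (R̂(C₀)/(θ Ŝ(C₀))) · max_C Ŝ(C), every minimizer of the penalized ratio
is feasible, and the penalized minimum equals the constrained minimum. -/
theorem exact_penalty {α : Type*} [Fintype α] [DecidableEq α]
    (R S : Finset α → ℝ) (hR0 : R ∅ = 0) (hS0 : S ∅ = 0)
    (hRpos : ∀ A : Finset α, 0 ≤ R A) (hSpos : ∀ A : Finset α, 0 ≤ S A)
    (K : ℕ) (M : Fin K → Finset α → ℝ) (k : Fin K → ℝ)
    (T : Finset α → ℝ)
    (hT : ∀ C : Finset α, T C = if C = ∅ then 0 else ∑ i, max 0 (M i C - k i))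
    (θ : ℝ) (hθpos : 0 < θ)
    (hθle : ∀ (i : Fin K) (C : Finset α), k i < M i C → θ ≤ M i C - k i)
    (hθatt : ∃ (i : Fin K) (C : Finset α), k i < M i C ∧ M i C - k i = θ)
    (C₀ : Finset α) (hC₀ : ∀ i, M i C₀ ≤ k i) (hSC₀ : 0 < S C₀)
    (γ : ℝ) (hγ : R C₀ / (θ * S C₀) * sSup (Set.range S) < γ) :
    (∀ Cs : Finset α, 0 < S Cs →
        (∀ C : Finset α, 0 < S C →
          (R Cs + γ * T Cs) / S Cs ≤ (R C + γ * T C) / S C) →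
        ∀ i, M i Cs ≤ k i) ∧
    sInf {q : ℝ | ∃ C : Finset α, 0 < S C ∧ q = (R C + γ * T C) / S C}
      = sInf {q : ℝ | ∃ C : Finset α, (∀ i, M i C ≤ k i) ∧ 0 < S C ∧ q = R C / S C} := by
  have hbdd : BddAbove (Set.range S) := (Set.finite_range S).bddAbove
  have hsup0 : 0 ≤ sSup (Set.range S) := hS0 ▸ le_csSup hbdd ⟨∅, rfl⟩
  have hd : 0 < θ * S C₀ := mul_pos hθpos hSC₀
  have hγ0 : 0 < γ :=
    lt_of_le_of_lt (mul_nonneg (div_nonneg (hRpos C₀) hd.le) hsup0) hγ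
  have hTfeas : ∀ C : Finset α, (∀ i, M i C ≤ k i) → T C = 0 := by
    intro C hfe
    rw [hT C]
    split
    · rfl
    · refine Finset.sum_eq_zero fun i _ => ?_
      simp [max_eq_left, sub_nonpos.mpr (hfe i)]
  have hTnn : ∀ C : Finset α, 0 ≤ T C := by
    intro C
    rw [hT C]
    split
    · exact le_refl 0
    · exact Finset.sum_nonneg fun i _ => le_max_left _ _
  have part1 : ∀ Cs : Finset α, 0 < S Cs →
      (∀ C : Finset α, 0 < S C →
        (R Cs + γ * T Cs) / S Cs ≤ (R C + γ * T C) / S C) →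
      ∀ i, M i Cs ≤ k i := by
    intro Cs hSCs hmin i
    by_contra hlt
    push_neg at hlt
    have hCsne : Cs ≠ ∅ := by rintro rfl; rw [hS0] at hSCs; exact lt_irrefl 0 hSCs
    have hTCs : θ ≤ T Cs := by
      rw [hT Cs, if_neg hCsne]
      calc θ ≤ max 0 (M i Cs - k i) := le_max_of_le_right (hθle i Cs hlt)
        _ ≤ ∑ j, max 0 (M j Cs - k j) :=
          Finset.single_le_sum (f := fun j => max 0 (M j Cs - k j))
            (fun j _ => le_max_left _ _) (Finset.mem_univ i)
    have hmin' := hmin C₀ hSC₀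
    rw [hTfeas C₀ hC₀] at hmin'
    have h1 : γ * θ / S Cs ≤ R C₀ / S C₀ := by
      refine le_trans ?_ (by simpa using hmin')
      apply div_le_div_of_nonneg_right ?_ hSCs.le |>.trans_eq rfl
      nlinarith [hRpos Cs, mul_le_mul_of_nonneg_left hTCs hγ0.le]
    rw [div_le_div_iff₀ hSCs hSC₀] at h1
    rw [div_mul_eq_mul_div, div_lt_iff₀ hd] at hγ
    have hSle : S Cs ≤ sSup (Set.range S) := le_csSup hbdd ⟨Cs, rfl⟩
    nlinarith [mul_le_mul_of_nonneg_left hSle (hRpos C₀)]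
  refine ⟨part1, ?_⟩
  set A := {q : ℝ | ∃ C : Finset α, 0 < S C ∧ q = (R C + γ * T C) / S C} with hA
  set B := {q : ℝ | ∃ C : Finset α, (∀ i, M i C ≤ k i) ∧ 0 < S C ∧ q = R C / S C} with hB
  have hAfin : A.Finite :=
    (Set.finite_range (fun C : Finset α => (R C + γ * T C) / S C)).subset
      (by rintro q ⟨C, _, rfl⟩; exact ⟨C, rfl⟩)
  have hBfin : B.Finite :=
    (Set.finite_range (fun C : Finset α => R C / S C)).subset
      (by rintro q ⟨C, _, _, rfl⟩; exact ⟨C, rfl⟩)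
  have hAne : A.Nonempty := ⟨_, C₀, hSC₀, rfl⟩
  have hBne : B.Nonempty := ⟨_, C₀, hC₀, hSC₀, rfl⟩
  have hBsubA : B ⊆ A := by
    rintro q ⟨C, hfe, hSC, rfl⟩
    exact ⟨C, hSC, by rw [hTfeas C hfe]; ring⟩
  refine le_antisymm (csInf_le_csInf hAfin.bddBelow hBne hBsubA) ?_
  obtain ⟨Cs, hSCs, hq⟩ := hAne.csInf_mem hAfin
  have hminCs : ∀ C : Finset α, 0 < S C →
      (R Cs + γ * T Cs) / S Cs ≤ (R C + γ * T C) / S C := by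
    intro C hSC
    rw [← hq]
    exact csInf_le hAfin.bddBelow ⟨C, hSC, rfl⟩
  have hfe := part1 Cs hSCs hminCs
  have : sInf A ∈ B := by
    refine ⟨Cs, hfe, hSCs, ?_⟩
    rw [hq, hTfeas Cs hfe]; ring
  exact csInf_le hBfin.bddBelow this
end

section
/- Monotonic descent of RatioDCA: let R = R₁ - R₂ and S = S₁ - S₂ with R₁, R₂, S₁, S₂ convex positively one-homogeneous, R, S non-negative on ℝ₊^n, and Q(f) = R(f)/S(f). Given f^l ∈ ℝ₊^n with S(f^l) > 0 and λ^l = Q(f^l), let f^{l+1} minimize Φ(u) = R₁(u) - ⟨u, r₂(f^l)⟩ + λ^l(S₂(u) - ⟨u, s₁(f^l)⟩) over {u ∈ ℝ₊^n : ‖u‖₂ ≤ 1}, where r₂(f^l) ∈ ∂R₂(f^l) and s₁(f^l) ∈ ∂S₁(f^l). If the minimal value of Φ is negative, then Q(f^{l+1}) < Q(f^l). -/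
/-!
A subgradient `g` of a positively one-homogeneous `F` at any point satisfies `⟨x, g⟩ ≤ F x` for
all `x`. Applied to `R₂` and `S₁`, and using `λ ≥ 0`, this shows that the inner objective `Φ`
dominates `R - λ S`; so `Φ(f^{l+1}) < 0` gives `R(f^{l+1}) < λ S(f^{l+1})`, and since
`R(f^{l+1}) ≥ 0` this forces `S(f^{l+1}) > 0` and `Q(f^{l+1}) < λ`.
-/

section OneHomogeneous

variable {E : Type*} [AddCommGroup E] [Module ℝ E] {F : E → ℝ} {g : E →ₗ[ℝ] ℝ} {y : E}

theorem apply_zero_of_one_homogeneous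
    (hF : ∀ α : ℝ, 0 ≤ α → ∀ x, F (α • x) = α * F x) : F 0 = 0 := by
  simpa using hF 0 le_rfl 0

/-- Testing the subgradient inequality at `0` and at `2 • y` gives both inequalities. -/
theorem subgradient_apply_eq_of_one_homogeneous
    (hF : ∀ α : ℝ, 0 ≤ α → ∀ x, F (α • x) = α * F x)
    (hg : ∀ x, F y + g (x - y) ≤ F x) : g y = F y := by
  have at_zero := hg 0
  have at_two := hg ((2 : ℝ) • y)
  rw [apply_zero_of_one_homogeneous hF, zero_sub, map_neg] at at_zero
  rw [hF 2 zero_le_two, two_smul, add_sub_cancel_right] at at_two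
  linarith

theorem subgradient_le_of_one_homogeneous
    (hF : ∀ α : ℝ, 0 ≤ α → ∀ x, F (α • x) = α * F x)
    (hg : ∀ x, F y + g (x - y) ≤ F x) (x : E) : g x ≤ F x := by
  have := hg x
  rw [map_sub, subgradient_apply_eq_of_one_homogeneous hF hg] at this
  linarith

end OneHomogeneous

theorem div_lt_of_sub_mul_neg {a b c : ℝ} (ha : 0 ≤ a) (hb : 0 ≤ b) (h : a - c * b < 0) :
    a / b < c := by
  have hb_pos : 0 < b := hb.lt_of_ne <| by rintro rfl; linarith
  rw [div_lt_iff₀ hb_pos]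
  linarith

theorem dotProduct_le_of_one_homogeneous {n : ℕ} {F : (Fin n → ℝ) → ℝ}
    (hF : ∀ α : ℝ, 0 ≤ α → ∀ x : Fin n → ℝ, F (α • x) = α * F x) {y g : Fin n → ℝ}
    (hg : ∀ x : Fin n → ℝ, F y + ∑ i, g i * (x i - y i) ≤ F x) (x : Fin n → ℝ) :
    ∑ i, x i * g i ≤ F x := by
  rw [← dotProduct, dotProduct_comm]
  exact subgradient_le_of_one_homogeneous (g := dotProductBilin ℝ ℝ g) hF hg x

theorem ratioDCA_descent_general {n : ℕ}
    (R₁ R₂ S₁ S₂ : (Fin n → ℝ) → ℝ)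
    (hR₂h : ∀ α : ℝ, 0 ≤ α → ∀ f : Fin n → ℝ, R₂ (α • f) = α * R₂ f)
    (hS₁h : ∀ α : ℝ, 0 ≤ α → ∀ f : Fin n → ℝ, S₁ (α • f) = α * S₁ f)
    (hRpos : ∀ f : Fin n → ℝ, (∀ i, 0 ≤ f i) → 0 ≤ R₁ f - R₂ f)
    (hSpos : ∀ f : Fin n → ℝ, (∀ i, 0 ≤ f i) → 0 ≤ S₁ f - S₂ f)
    (fl : Fin n → ℝ) (hfl : ∀ i, 0 ≤ fl i) (hSfl : 0 < S₁ fl - S₂ fl)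
    (lam : ℝ) (hlam : lam = (R₁ fl - R₂ fl) / (S₁ fl - S₂ fl))
    (r₂ s₁ : Fin n → ℝ)
    (hr₂ : ∀ x : Fin n → ℝ, R₂ fl + ∑ i, r₂ i * (x i - fl i) ≤ R₂ x)
    (hs₁ : ∀ x : Fin n → ℝ, S₁ fl + ∑ i, s₁ i * (x i - fl i) ≤ S₁ x)
    (fn : Fin n → ℝ) (hfn : ∀ i, 0 ≤ fn i)
    (hneg : R₁ fn - (∑ i, fn i * r₂ i) + lam * (S₂ fn - ∑ i, fn i * s₁ i) < 0) :
    (R₁ fn - R₂ fn) / (S₁ fn - S₂ fn) < lam := by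
  have hlam_nonneg : 0 ≤ lam := hlam ▸ div_nonneg (hRpos fl hfl) hSfl.le
  have hR₂ := dotProduct_le_of_one_homogeneous hR₂h hr₂ fn
  have hS₁ := dotProduct_le_of_one_homogeneous hS₁h hs₁ fn
  have hS_gap : lam * (S₂ fn - S₁ fn) ≤ lam * (S₂ fn - ∑ i, fn i * s₁ i) := by gcongr
  exact div_lt_of_sub_mul_neg (hRpos fn hfn) (hSpos fn hfn) (by linarith)

/-- monotonic descent of RatioDCA: if the inner problem of RatioDCA
has a negative optimal value, the ratio strictly decreases. -/
theorem ratioDCA_descent {n : ℕ}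
    (R₁ R₂ S₁ S₂ : (Fin n → ℝ) → ℝ)
    (hR₁c : ConvexOn ℝ Set.univ R₁) (hR₂c : ConvexOn ℝ Set.univ R₂)
    (hS₁c : ConvexOn ℝ Set.univ S₁) (hS₂c : ConvexOn ℝ Set.univ S₂)
    (hR₁h : ∀ α : ℝ, 0 ≤ α → ∀ f : Fin n → ℝ, R₁ (α • f) = α * R₁ f)
    (hR₂h : ∀ α : ℝ, 0 ≤ α → ∀ f : Fin n → ℝ, R₂ (α • f) = α * R₂ f)
    (hS₁h : ∀ α : ℝ, 0 ≤ α → ∀ f : Fin n → ℝ, S₁ (α • f) = α * S₁ f)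
    (hS₂h : ∀ α : ℝ, 0 ≤ α → ∀ f : Fin n → ℝ, S₂ (α • f) = α * S₂ f)
    (hRpos : ∀ f : Fin n → ℝ, (∀ i, 0 ≤ f i) → 0 ≤ R₁ f - R₂ f)
    (hSpos : ∀ f : Fin n → ℝ, (∀ i, 0 ≤ f i) → 0 ≤ S₁ f - S₂ f)
    (fl : Fin n → ℝ) (hfl : ∀ i, 0 ≤ fl i) (hSfl : 0 < S₁ fl - S₂ fl)
    (lam : ℝ) (hlam : lam = (R₁ fl - R₂ fl) / (S₁ fl - S₂ fl))
    (r₂ s₁ : Fin n → ℝ)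
    (hr₂ : ∀ x : Fin n → ℝ, R₂ fl + ∑ i, r₂ i * (x i - fl i) ≤ R₂ x)
    (hs₁ : ∀ x : Fin n → ℝ, S₁ fl + ∑ i, s₁ i * (x i - fl i) ≤ S₁ x)
    (fn : Fin n → ℝ) (hfn : ∀ i, 0 ≤ fn i) (hfnorm : ∑ i, (fn i) ^ 2 ≤ 1)
    (hmin : ∀ u : Fin n → ℝ, (∀ i, 0 ≤ u i) → ∑ i, (u i) ^ 2 ≤ 1 →
        R₁ fn - (∑ i, fn i * r₂ i) + lam * (S₂ fn - ∑ i, fn i * s₁ i)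
          ≤ R₁ u - (∑ i, u i * r₂ i) + lam * (S₂ u - ∑ i, u i * s₁ i))
    (hneg : R₁ fn - (∑ i, fn i * r₂ i) + lam * (S₂ fn - ∑ i, fn i * s₁ i) < 0) :
    (R₁ fn - R₂ fn) / (S₁ fn - S₂ fn) < lam :=
  ratioDCA_descent_general R₁ R₂ S₁ S₂ hR₂h hS₁h hRpos hSpos fl hfl hSfl lam hlam r₂ s₁ hr₂ hs₁ fn
    hfn hneg
end

section
/- Projection reduction: for x ∈ ℝ^n, let y = P_{ℝ₊^n}(x) be the coordinatewise projection onto the non-negative orthant. Then any minimizer of v ↦ ‖y - v‖₂² over the simplex S_n = {v ∈ ℝ^n : v_i ≥ 0, Σv_i = 1} is also a minimizer of v ↦ ‖P_{ℝ₊^n}(x - v)‖₂² over S_n. -/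
/-!
Write `y = P(x)`. For `u ≥ 0` one has `P(x - u) = P(y - u)` coordinatewise, so the second
objective is `f(u) = ‖P(y - u)‖²`, a convex function with gradient `-2 P(y - v)` at `v`.
Since `v` is the projection of `y` onto `S_n`, it maximizes `⟨y - v, ·⟩` on `S_n`, i.e. it is
supported where `y - v` is maximal. The monotone map `t ↦ max t 0` preserves this, so `v` also
maximizes `⟨P(y - v), ·⟩` on `S_n`, which is the first-order optimality condition for `f`.
-/

open Finset

theorem max_sub_max_zero_of_nonneg {u : ℝ} (hu : 0 ≤ u) (x : ℝ) :
    max (max x 0 - u) 0 = max (x - u) 0 := by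
  rcases le_total x 0 with hx | hx
  · rw [max_eq_right hx, max_eq_right (by linarith), max_eq_right (by linarith)]
  · rw [max_eq_left hx]

theorem sq_max_zero_add_le (a b : ℝ) :
    max a 0 ^ 2 + 2 * max a 0 * (b - a) ≤ max b 0 ^ 2 := by
  rcases le_total a 0 with ha | ha <;> rcases le_total b 0 with hb | hb <;>
    simp only [max_eq_left, max_eq_right, ha, hb] <;> nlinarith [sq_nonneg (b - a)]

theorem isMaxOn_dotProduct_of_isMinOn_sum_sq {ι : Type*} [Fintype ι] {K : Set (ι → ℝ)}
    (hK : Convex ℝ K) {y v : ι → ℝ} (hv : v ∈ K)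
    (hmin : IsMinOn (fun u ↦ ∑ i, (y i - u i) ^ 2) K v) :
    IsMaxOn ((y - v) ⬝ᵥ ·) K v := by
  set L : Set (EuclideanSpace ℝ ι) := WithLp.ofLp ⁻¹' K
  have hL : Convex ℝ L := hK.linear_preimage (WithLp.linearEquiv 2 ℝ (ι → ℝ)).toLinearMap
  have hvL : WithLp.toLp 2 v ∈ L := hv
  have hnorm : IsMinOn (‖WithLp.toLp 2 y - ·‖) L (WithLp.toLp 2 v) := fun u hu ↦ by
    simpa [EuclideanSpace.norm_eq] using Real.sqrt_le_sqrt (hmin hu)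
  intro w hw
  have hinner : (y - v) ⬝ᵥ (w - v) ≤ 0 := by
    simpa [EuclideanSpace.inner_eq_star_dotProduct, dotProduct_comm] using
      (norm_eq_iInf_iff_real_inner_le_zero hL hvL).1 (hnorm.iInf_eq hvL).symm (WithLp.toLp 2 w) hw
  simpa [dotProduct_sub] using hinner

theorem IsMaxOn.comp_dotProduct_stdSimplex {ι : Type*} [Fintype ι] {d v : ι → ℝ}
    (hv : v ∈ stdSimplex ℝ ι) (h : IsMaxOn (d ⬝ᵥ ·) (stdSimplex ℝ ι) v)
    {φ : ℝ → ℝ} (hφ : Monotone φ) : IsMaxOn ((φ ∘ d) ⬝ᵥ ·) (stdSimplex ℝ ι) v := by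
  set S := d ⬝ᵥ v
  have hle (k : ι) : d k ≤ S := by classical simpa using h (single_mem_stdSimplex ℝ k)
  have hslack : ∀ i ∈ univ, v i * (S - d i) = 0 := by
    refine (sum_eq_zero_iff_of_nonneg fun i _ ↦ mul_nonneg (hv.1 i) (sub_nonneg.2 (hle i))).1 ?_
    simp only [mul_sub, sum_sub_distrib, ← sum_mul, hv.2, one_mul]
    simp [S, dotProduct, mul_comm]
  have hsupp (i : ι) : v i * φ (d i) = v i * φ S := by
    rcases mul_eq_zero.1 (hslack i (mem_univ i)) with h0 | hS
    · simp [h0]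
    · rw [sub_eq_zero.1 hS]
  intro w hw
  calc (φ ∘ d) ⬝ᵥ w = ∑ i, w i * φ (d i) := by simp [dotProduct, mul_comm]
    _ ≤ ∑ i, w i * φ S := sum_le_sum fun i _ ↦ mul_le_mul_of_nonneg_left (hφ (hle i)) (hw.1 i)
    _ = ∑ i, v i * φ S := by rw [← sum_mul, ← sum_mul, hw.2, hv.2]
    _ = (φ ∘ d) ⬝ᵥ v := by simp [hsupp, dotProduct, mul_comm]

/-- any minimizer over the simplex of ‖P_{ℝ₊ⁿ}(x) - v‖² is also a
minimizer over the simplex of ‖P_{ℝ₊ⁿ}(x - v)‖². -/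
theorem simplex_projection_reduction {n : ℕ} (x v : Fin n → ℝ)
    (hv₁ : ∀ i, 0 ≤ v i) (hv₂ : ∑ i, v i = 1)
    (hmin : ∀ w : Fin n → ℝ, (∀ i, 0 ≤ w i) → (∑ i, w i = 1) →
        ∑ i, (max (x i) 0 - v i) ^ 2 ≤ ∑ i, (max (x i) 0 - w i) ^ 2) :
    ∀ w : Fin n → ℝ, (∀ i, 0 ≤ w i) → (∑ i, w i = 1) →
        ∑ i, (max (x i - v i) 0) ^ 2 ≤ ∑ i, (max (x i - w i) 0) ^ 2 := by
  intro w hw₁ hw₂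
  set y : Fin n → ℝ := fun i ↦ max (x i) 0
  have hv : v ∈ stdSimplex ℝ (Fin n) := ⟨hv₁, hv₂⟩
  have hproj : IsMaxOn ((y - v) ⬝ᵥ ·) (stdSimplex ℝ (Fin n)) v :=
    isMaxOn_dotProduct_of_isMinOn_sum_sq (convex_stdSimplex ℝ _) hv fun u hu ↦ hmin u hu.1 hu.2
  set m : Fin n → ℝ := fun i ↦ max (y i - v i) 0
  have hm : m ⬝ᵥ w ≤ m ⬝ᵥ v :=
    hproj.comp_dotProduct_stdSimplex hv (fun _ _ h ↦ max_le_max_right 0 h) ⟨hw₁, hw₂⟩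
  calc ∑ i, max (x i - v i) 0 ^ 2 = ∑ i, m i ^ 2 := by
        simp only [m, y, max_sub_max_zero_of_nonneg (hv₁ _)]
    _ ≤ ∑ i, m i ^ 2 + 2 * (m ⬝ᵥ v - m ⬝ᵥ w) := by linarith
    _ = ∑ i, (m i ^ 2 + 2 * m i * ((y i - w i) - (y i - v i))) := by
        simp only [sum_add_distrib, dotProduct, mul_sum, ← sum_sub_distrib]
        congr 1; refine sum_congr rfl fun i _ ↦ by ring
    _ ≤ ∑ i, max (y i - w i) 0 ^ 2 := sum_le_sum fun i _ ↦ sq_max_zero_add_le _ _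
    _ = ∑ i, max (x i - w i) 0 ^ 2 := by simp only [y, max_sub_max_zero_of_nonneg (hw₁ _)]
end
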